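/- arXiv:1703.04957 — 2 statements merged into one kernel-verified Lean document; each statement's English description precedes it below -/
import Mathlib

section
/- For Borel probability measures μ, μ̃ on ℝ with quantile functions F⁻¹ and F̃⁻¹ and finite q-th moments (q ≥ 1), the quantity ∫₀¹ |F⁻¹(p) − F̃⁻¹(p)|^q dp is a lower bound for ∫ |x − x̃|^q dγ(x, x̃) over all couplings γ of μ and μ̃; that is, the q-Wasserstein distance to the q-th power equals the L^q distance between quantile functions. -/
/-!
For `U` uniform on `(0, 1)`, the quantile coupling `(F⁻¹(U), F̃⁻¹(U))` has marginals `μ` and `μ̃`,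
and it gives every quadrant `{x ≤ s, t < x̃}` the mass `(F(s) - F̃(t))₊`, which is the
Fréchet–Hoeffding lower bound for the mass of that quadrant under any coupling. For `q ≥ 1` the
cost `|x - x̃| ^ q` is a mixture of indicators of such quadrants and of their reflections (with
weight `q (q - 1) (t - s) ^ (q - 2) ds dt` on `s < t` if `q > 1`, and `ds` on the diagonal if
`q = 1`), so by Tonelli no coupling is cheaper than the quantile coupling.
-/

open MeasureTheory ProbabilityTheory

/-- The left-continuous quantile function of a Borel probability measure on ℝ. -/
noncomputable def quantileFn (m : Measure ℝ) (p : ℝ) : ℝ :=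
  sInf {x : ℝ | p ≤ (m (Set.Iic x)).toReal}

open Set

theorem volume_Iic_inter_Ioo {a : ℝ} (ha : a ≤ 1) :
    volume (Iic a ∩ Ioo 0 1) = ENNReal.ofReal a := by
  refine le_antisymm ?_ ?_
  · calc volume (Iic a ∩ Ioo 0 1) ≤ volume (Ioc 0 a) := measure_mono fun _ hp => ⟨hp.2.1, hp.1⟩
      _ = ENNReal.ofReal a := by rw [Real.volume_Ioc, sub_zero]
  · calc ENNReal.ofReal a = volume (Ioo 0 a) := by rw [Real.volume_Ioo, sub_zero]
      _ ≤ volume (Iic a ∩ Ioo 0 1) := measure_mono fun _ hp => ⟨hp.2.le, hp.1, hp.2.trans_le ha⟩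

section Quantile

variable {μ : Measure ℝ} {p : ℝ}

theorem bddBelow_setOf_le_cdf (hp : 0 < p) : BddBelow {x | p ≤ cdf μ x} := by
  obtain ⟨a, ha⟩ := ((tendsto_cdf_atBot μ).eventually (eventually_lt_nhds hp)).exists
  exact ⟨a, fun x hx => le_of_not_ge fun hxa => (hx.trans (monotone_cdf μ hxa)).not_gt ha⟩

theorem nonempty_setOf_le_cdf (hp : p < 1) : {x | p ≤ cdf μ x}.Nonempty :=
  ((tendsto_cdf_atTop μ).eventually (eventually_ge_nhds hp)).exists

variable [IsProbabilityMeasure μ]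

theorem quantileFn_eq_sInf (p : ℝ) : quantileFn μ p = sInf {x | p ≤ cdf μ x} := by
  simp only [quantileFn, cdf_eq_real, measureReal_def]

theorem le_cdf_quantileFn (hp : p ∈ Ioo 0 1) : p ≤ cdf μ (quantileFn μ p) := by
  rw [quantileFn_eq_sInf]
  set a := sInf {x | p ≤ cdf μ x}
  have h_right : ∀ x ∈ Ioi a, p ≤ cdf μ x := fun x hx => by
    obtain ⟨y, hy, hyx⟩ :=
      (csInf_lt_iff (bddBelow_setOf_le_cdf hp.1) (nonempty_setOf_le_cdf hp.2)).1 hx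
    exact hy.trans (monotone_cdf μ hyx.le)
  exact ge_of_tendsto (((cdf μ).right_continuous a).mono Ioi_subset_Ici_self)
    (eventually_nhdsWithin_of_forall h_right)

theorem quantileFn_le_iff (hp : p ∈ Ioo 0 1) {x : ℝ} : quantileFn μ p ≤ x ↔ p ≤ cdf μ x :=
  ⟨fun h => (le_cdf_quantileFn hp).trans (monotone_cdf μ h),
    fun h => (quantileFn_eq_sInf p).trans_le (csInf_le (bddBelow_setOf_le_cdf hp.1) h)⟩

theorem monotoneOn_quantileFn : MonotoneOn (quantileFn μ) (Ioo 0 1) :=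
  fun _ hp _ hp' hpp' => (quantileFn_le_iff hp).2 (hpp'.trans (le_cdf_quantileFn hp'))

theorem aemeasurable_quantileFn : AEMeasurable (quantileFn μ) (volume.restrict (Ioo 0 1)) :=
  aemeasurable_restrict_of_monotoneOn measurableSet_Ioo monotoneOn_quantileFn

theorem map_quantileFn_volume : (volume.restrict (Ioo 0 1)).map (quantileFn μ) = μ := by
  refine Measure.ext_of_Iic _ _ fun x => ?_
  rw [Measure.map_apply_of_aemeasurable aemeasurable_quantileFn measurableSet_Iic,
    Measure.restrict_apply' measurableSet_Ioo, ← ofReal_cdf,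
    ← volume_Iic_inter_Ioo (cdf_le_one μ x)]
  congr 1
  ext p
  exact and_congr_left fun hp => quantileFn_le_iff hp

end Quantile

theorem MeasureTheory.Measure.map_fst_sub_map_snd_le {α β : Type*} [MeasurableSpace α]
    [MeasurableSpace β] (γ : Measure (α × β)) {s : Set α} (hs : MeasurableSet s) (t : Set β) :
    γ.map Prod.fst s - γ.map Prod.snd t ≤ γ (s ×ˢ tᶜ) := by
  rw [Measure.map_apply measurable_fst hs, tsub_le_iff_right]
  calc γ (Prod.fst ⁻¹' s) ≤ γ (s ×ˢ tᶜ ∪ Prod.snd ⁻¹' t) :=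
        measure_mono fun z hz => (em (z.2 ∈ t)).elim Or.inr fun h => Or.inl ⟨hz, h⟩
    _ ≤ γ (s ×ˢ tᶜ) + γ (Prod.snd ⁻¹' t) := measure_union_le _ _
    _ ≤ γ (s ×ˢ tᶜ) + γ.map Prod.snd t :=
        add_le_add_right (Measure.le_map_apply measurable_snd.aemeasurable t) _

noncomputable def quantileCoupling (μ ν : Measure ℝ) : Measure (ℝ × ℝ) :=
  (volume.restrict (Ioo 0 1)).map fun p => (quantileFn μ p, quantileFn ν p)

section QuantileCoupling

variable {μ ν : Measure ℝ} [IsProbabilityMeasure μ] [IsProbabilityMeasure ν]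

theorem aemeasurable_quantileFn_prod :
    AEMeasurable (fun p => (quantileFn μ p, quantileFn ν p)) (volume.restrict (Ioo 0 1)) :=
  aemeasurable_quantileFn.prodMk aemeasurable_quantileFn

instance isProbabilityMeasure_quantileCoupling : IsProbabilityMeasure (quantileCoupling μ ν) := by
  have : IsProbabilityMeasure (volume.restrict (Ioo (0 : ℝ) 1)) := ⟨by simp⟩
  exact Measure.isProbabilityMeasure_map aemeasurable_quantileFn_prod

theorem map_fst_quantileCoupling : (quantileCoupling μ ν).map Prod.fst = μ := by
  rw [quantileCoupling, AEMeasurable.map_map_of_aemeasurable measurable_fst.aemeasurable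
    aemeasurable_quantileFn_prod]
  exact map_quantileFn_volume

theorem map_snd_quantileCoupling : (quantileCoupling μ ν).map Prod.snd = ν := by
  rw [quantileCoupling, AEMeasurable.map_map_of_aemeasurable measurable_snd.aemeasurable
    aemeasurable_quantileFn_prod]
  exact map_quantileFn_volume

theorem map_swap_quantileCoupling :
    (quantileCoupling μ ν).map Prod.swap = quantileCoupling ν μ := by
  rw [quantileCoupling, AEMeasurable.map_map_of_aemeasurable measurable_swap.aemeasurable
    aemeasurable_quantileFn_prod]
  rfl

theorem quantileCoupling_Iic_prod_Ioi_le (s t : ℝ) :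
    quantileCoupling μ ν (Iic s ×ˢ Ioi t) ≤ μ (Iic s) - ν (Iic t) := by
  rw [quantileCoupling, Measure.map_apply_of_aemeasurable aemeasurable_quantileFn_prod
    (measurableSet_Iic.prod measurableSet_Ioi), Measure.restrict_apply' measurableSet_Ioo,
    ← ofReal_cdf, ← ofReal_cdf, ← ENNReal.ofReal_sub _ (cdf_nonneg ν t), ← Real.volume_Ioc]
  refine measure_mono fun p ⟨⟨hs, ht⟩, hp⟩ => ⟨?_, (quantileFn_le_iff hp).1 hs⟩
  exact lt_of_not_ge fun h => (not_le.2 ht) ((quantileFn_le_iff hp).2 h)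

theorem quantileCoupling_Iic_prod_Ioi_le_of_map {γ : Measure (ℝ × ℝ)} (hγ₁ : γ.map Prod.fst = μ)
    (hγ₂ : γ.map Prod.snd = ν) (s t : ℝ) :
    quantileCoupling μ ν (Iic s ×ˢ Ioi t) ≤ γ (Iic s ×ˢ Ioi t) :=
  calc quantileCoupling μ ν (Iic s ×ˢ Ioi t) ≤ μ (Iic s) - ν (Iic t) :=
        quantileCoupling_Iic_prod_Ioi_le s t
    _ ≤ γ (Iic s ×ˢ (Iic t)ᶜ) := hγ₁ ▸ hγ₂ ▸ γ.map_fst_sub_map_snd_le measurableSet_Iic _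
    _ = γ (Iic s ×ˢ Ioi t) := by rw [compl_Iic]

end QuantileCoupling

theorem lintegral_measure_Ici_prod_Iio (κ ρ : Measure (ℝ × ℝ)) [SFinite κ] [SFinite ρ] :
    ∫⁻ z, ρ (Ici z.1 ×ˢ Iio z.2) ∂κ = ∫⁻ w, κ (Iic w.1 ×ˢ Ioi w.2) ∂ρ := by
  have hE : MeasurableSet {v : (ℝ × ℝ) × (ℝ × ℝ) | v.1.1 ≤ v.2.1 ∧ v.2.2 < v.1.2} := by
    measurability
  exact (Measure.prod_apply hE).symm.trans (Measure.prod_apply_symm hE)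

theorem measurable_measure_Ici_prod_Iio (ρ : Measure (ℝ × ℝ)) [SFinite ρ] :
    Measurable fun z : ℝ × ℝ => ρ (Ici z.1 ×ˢ Iio z.2) :=
  measurable_measure_prodMk_left (s := {v : (ℝ × ℝ) × (ℝ × ℝ) | v.1.1 ≤ v.2.1 ∧ v.2.2 < v.1.2})
    (by measurability)

theorem lintegral_measure_Ici_prod_Iio_add_swap (κ ρ : Measure (ℝ × ℝ)) [SFinite κ]
    [SFinite ρ] :
    ∫⁻ z, ρ (Ici z.1 ×ˢ Iio z.2) + ρ (Ici z.2 ×ˢ Iio z.1) ∂κ =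
      ∫⁻ w, κ (Iic w.1 ×ˢ Ioi w.2) ∂ρ + ∫⁻ w, κ.map Prod.swap (Iic w.1 ×ˢ Ioi w.2) ∂ρ := by
  rw [lintegral_add_left (measurable_measure_Ici_prod_Iio ρ), ← lintegral_measure_Ici_prod_Iio,
    ← lintegral_measure_Ici_prod_Iio, lintegral_map (measurable_measure_Ici_prod_Iio ρ)
    measurable_swap]
  rfl

theorem lintegral_Ioo_ofReal_eq_intervalIntegral {f : ℝ → ℝ} {a b : ℝ} (hab : a ≤ b)
    (hf : IntervalIntegrable f volume a b) (hf₀ : ∀ t ∈ Ioo a b, 0 ≤ f t) :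
    ∫⁻ t in Ioo a b, ENNReal.ofReal (f t) = ENNReal.ofReal (∫ t in a..b, f t) := by
  rw [intervalIntegral.integral_of_le hab, integral_Ioc_eq_integral_Ioo,
    ofReal_integral_eq_lintegral_ofReal (hf.1.mono_set Ioo_subset_Ioc_self)
      ((ae_restrict_iff' measurableSet_Ioo).2 (.of_forall hf₀))]

theorem lintegral_Ioo_ofReal_mul_rpow_sub_right {a b c r : ℝ} (hab : a ≤ b) (hc : 0 ≤ c)
    (hr : -1 < r) :
    ∫⁻ t in Ioo a b, ENNReal.ofReal (c * (t - a) ^ r) =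
      ENNReal.ofReal (c * ((b - a) ^ (r + 1) / (r + 1))) := by
  have hint : IntervalIntegrable (fun t => (t - a) ^ r) volume a b := by
    simpa using
      (intervalIntegral.intervalIntegrable_rpow' hr (a := a - a) (b := b - a)).comp_sub_right a
  rw [lintegral_Ioo_ofReal_eq_intervalIntegral hab (hint.const_mul c)
      fun t ht => mul_nonneg hc (Real.rpow_nonneg (sub_nonneg.2 ht.1.le) _),
    intervalIntegral.integral_const_mul, intervalIntegral.integral_comp_sub_right (· ^ r),
    sub_self, integral_rpow (Or.inl hr), Real.zero_rpow (by linarith), sub_zero]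

theorem lintegral_Ioo_ofReal_mul_rpow_sub_left {a b c r : ℝ} (hab : a ≤ b) (hc : 0 ≤ c)
    (hr : -1 < r) :
    ∫⁻ t in Ioo a b, ENNReal.ofReal (c * (b - t) ^ r) =
      ENNReal.ofReal (c * ((b - a) ^ (r + 1) / (r + 1))) := by
  have hint : IntervalIntegrable (fun t => (b - t) ^ r) volume a b := by
    simpa using
      (intervalIntegral.intervalIntegrable_rpow' hr (a := b - a) (b := b - b)).comp_sub_left b
  rw [lintegral_Ioo_ofReal_eq_intervalIntegral hab (hint.const_mul c)
      fun t ht => mul_nonneg hc (Real.rpow_nonneg (sub_nonneg.2 ht.2.le) _),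
    intervalIntegral.integral_const_mul, intervalIntegral.integral_comp_sub_left (· ^ r),
    sub_self, integral_rpow (Or.inl hr), Real.zero_rpow (by linarith), sub_zero]

theorem map_diag_volume_Ici_prod_Iio (x y : ℝ) :
    (volume : Measure ℝ).map (fun s => (s, s)) (Ici x ×ˢ Iio y) = ENNReal.ofReal (y - x) := by
  rw [Measure.map_apply (by fun_prop)
    (measurableSet_Ici.prod measurableSet_Iio), ← Real.volume_Ico]
  rfl

/-- The density `q (q - 1) (t - s) ^ (q - 2)` is `-∂ₛ∂ₜ (t - s) ^ q`. -/
noncomputable def rpowQuadrantMeasure (q : ℝ) : Measure (ℝ × ℝ) :=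
  volume.withDensity <|
    {w | w.1 < w.2}.indicator fun w => ENNReal.ofReal (q * (q - 1) * (w.2 - w.1) ^ (q - 2))

theorem rpowQuadrantMeasure_Ici_prod_Iio {q : ℝ} (hq : 1 < q) (x y : ℝ) :
    rpowQuadrantMeasure q (Ici x ×ˢ Iio y) =
      ∫⁻ s in Ico x y, ENNReal.ofReal (q * (y - s) ^ (q - 1)) := by
  have hmeas : Measurable ({w : ℝ × ℝ | w.1 < w.2}.indicator
      fun w => ENNReal.ofReal (q * (q - 1) * (w.2 - w.1) ^ (q - 2))) := by
    refine Measurable.indicator ?_ (measurableSet_lt measurable_fst measurable_snd)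
    fun_prop
  have h_inner : ∀ s, ∫⁻ t in Iio y, {w : ℝ × ℝ | w.1 < w.2}.indicator
      (fun w => ENNReal.ofReal (q * (q - 1) * (w.2 - w.1) ^ (q - 2))) (s, t) =
      (Iio y).indicator (fun s => ENNReal.ofReal (q * (y - s) ^ (q - 1))) s := by
    intro s
    change ∫⁻ t in Iio y, (Ioi s).indicator
      (fun t => ENNReal.ofReal (q * (q - 1) * (t - s) ^ (q - 2))) t = _
    rw [lintegral_indicator measurableSet_Ioi, Measure.restrict_restrict measurableSet_Ioi,
      Ioi_inter_Iio]
    rcases lt_or_ge s y with hsy | hys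
    · rw [indicator_of_mem (s := Iio y) hsy, lintegral_Ioo_ofReal_mul_rpow_sub_right hsy.le
        (by nlinarith) (by linarith)]
      congr 1
      rw [show q - 2 + 1 = q - 1 by ring]
      field_simp [(by linarith : q - 1 ≠ 0)]
    · rw [indicator_of_notMem (s := Iio y) (not_lt.2 hys), Ioo_eq_empty (not_lt.2 hys),
        Measure.restrict_empty, lintegral_zero_measure]
  rw [rpowQuadrantMeasure, withDensity_apply _ (measurableSet_Ici.prod measurableSet_Iio),
    Measure.volume_eq_prod, ← Measure.prod_restrict, lintegral_prod _ hmeas.aemeasurable]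
  simp_rw [h_inner]
  rw [lintegral_indicator measurableSet_Iio, Measure.restrict_restrict measurableSet_Iio,
    Iio_inter_Ici]

theorem exists_measure_ofReal_abs_sub_rpow_eq {q : ℝ} (hq : 1 ≤ q) :
    ∃ ρ : Measure (ℝ × ℝ), SFinite ρ ∧ ∀ x y : ℝ,
      ENNReal.ofReal (|x - y| ^ q) = ρ (Ici x ×ˢ Iio y) + ρ (Ici y ×ˢ Iio x) := by
  rcases hq.eq_or_lt with rfl | hq
  · refine ⟨(volume : Measure ℝ).map fun s => (s, s), inferInstance, fun x y => ?_⟩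
    simp only [Real.rpow_one, map_diag_volume_Ici_prod_Iio]
    rcases le_total x y with hxy | hyx
    · rw [abs_sub_comm, abs_of_nonneg (sub_nonneg.2 hxy),
        ENNReal.ofReal_of_nonpos (sub_nonpos.2 hxy), add_zero]
    · rw [abs_of_nonneg (sub_nonneg.2 hyx), ENNReal.ofReal_of_nonpos (sub_nonpos.2 hyx), zero_add]
  · have h_ordered : ∀ x y : ℝ, x ≤ y →
        rpowQuadrantMeasure q (Ici x ×ˢ Iio y) = ENNReal.ofReal ((y - x) ^ q) ∧
          rpowQuadrantMeasure q (Ici y ×ˢ Iio x) = 0 := by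
      intro x y hxy
      rw [rpowQuadrantMeasure_Ici_prod_Iio hq, rpowQuadrantMeasure_Ici_prod_Iio hq,
        Ico_eq_empty_of_le hxy, Measure.restrict_empty, lintegral_zero_measure,
        ← Measure.restrict_congr_set Ioo_ae_eq_Ico,
        lintegral_Ioo_ofReal_mul_rpow_sub_left hxy (by linarith) (by linarith), sub_add_cancel,
        mul_div_cancel₀ _ (by linarith)]
      exact ⟨rfl, rfl⟩
    refine ⟨rpowQuadrantMeasure q, by rw [rpowQuadrantMeasure]; infer_instance,
      fun x y => ?_⟩
    rcases le_total x y with hxy | hyx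
    · rw [(h_ordered x y hxy).1, (h_ordered x y hxy).2, add_zero, abs_sub_comm,
        abs_of_nonneg (sub_nonneg.2 hxy)]
    · rw [(h_ordered y x hyx).1, (h_ordered y x hyx).2, zero_add, abs_of_nonneg (sub_nonneg.2 hyx)]

theorem lintegral_quantileCoupling_le {μ ν : Measure ℝ} [IsProbabilityMeasure μ]
    [IsProbabilityMeasure ν] {q : ℝ} (hq : 1 ≤ q) {γ : Measure (ℝ × ℝ)} [SFinite γ]
    (hγ₁ : γ.map Prod.fst = μ) (hγ₂ : γ.map Prod.snd = ν) :
    ∫⁻ z, ENNReal.ofReal (|z.1 - z.2| ^ q) ∂quantileCoupling μ ν ≤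
      ∫⁻ z, ENNReal.ofReal (|z.1 - z.2| ^ q) ∂γ := by
  obtain ⟨ρ, _, hρ⟩ := exists_measure_ofReal_abs_sub_rpow_eq hq
  have hγ_swap₁ : (γ.map Prod.swap).map Prod.fst = ν := by
    rw [Measure.map_map measurable_fst measurable_swap]; exact hγ₂
  have hγ_swap₂ : (γ.map Prod.swap).map Prod.snd = μ := by
    rw [Measure.map_map measurable_snd measurable_swap]; exact hγ₁
  simp_rw [hρ, lintegral_measure_Ici_prod_Iio_add_swap, map_swap_quantileCoupling]
  exact add_le_add
    (lintegral_mono fun w => quantileCoupling_Iic_prod_Ioi_le_of_map hγ₁ hγ₂ w.1 w.2)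
    (lintegral_mono fun w => quantileCoupling_Iic_prod_Ioi_le_of_map hγ_swap₁ hγ_swap₂ w.1 w.2)

theorem wasserstein_eq_quantile_distance_general
    (q : ℝ) (hq : 1 ≤ q)
    (μ ν : Measure ℝ) [IsProbabilityMeasure μ] [IsProbabilityMeasure ν] :
    (∀ γ : Measure (ℝ × ℝ), IsProbabilityMeasure γ →
        γ.map Prod.fst = μ → γ.map Prod.snd = ν →
        (∫⁻ p in Set.Ioo (0 : ℝ) 1,
          ENNReal.ofReal (|quantileFn μ p - quantileFn ν p| ^ q)) ≤
          ∫⁻ z, ENNReal.ofReal (|z.1 - z.2| ^ q) ∂γ) ∧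
    (⨅ γ : {γ : Measure (ℝ × ℝ) //
        IsProbabilityMeasure γ ∧ γ.map Prod.fst = μ ∧ γ.map Prod.snd = ν},
        ∫⁻ z, ENNReal.ofReal (|z.1 - z.2| ^ q) ∂(γ : Measure (ℝ × ℝ))) =
      ∫⁻ p in Set.Ioo (0 : ℝ) 1,
        ENNReal.ofReal (|quantileFn μ p - quantileFn ν p| ^ q) := by
  have h_cost : ∫⁻ p in Ioo (0 : ℝ) 1, ENNReal.ofReal (|quantileFn μ p - quantileFn ν p| ^ q) =
      ∫⁻ z, ENNReal.ofReal (|z.1 - z.2| ^ q) ∂quantileCoupling μ ν :=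
    (lintegral_map' (f := fun z : ℝ × ℝ => ENNReal.ofReal (|z.1 - z.2| ^ q))
      (by fun_prop) aemeasurable_quantileFn_prod).symm
  have h_lower : ∀ γ : Measure (ℝ × ℝ), IsProbabilityMeasure γ →
      γ.map Prod.fst = μ → γ.map Prod.snd = ν →
      ∫⁻ p in Ioo (0 : ℝ) 1, ENNReal.ofReal (|quantileFn μ p - quantileFn ν p| ^ q) ≤
        ∫⁻ z, ENNReal.ofReal (|z.1 - z.2| ^ q) ∂γ :=
    fun γ _ hγ₁ hγ₂ => h_cost ▸ lintegral_quantileCoupling_le hq hγ₁ hγ₂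
  refine ⟨h_lower, le_antisymm ?_ (le_iInf fun γ => h_lower γ γ.2.1 γ.2.2.1 γ.2.2.2)⟩
  exact iInf_le_of_le ⟨quantileCoupling μ ν, inferInstance, map_fst_quantileCoupling,
    map_snd_quantileCoupling⟩ h_cost.ge

/-- On ℝ, the `L^q` distance between quantile functions is a lower bound for the cost of
any coupling of `μ` and `ν`, and the `q`-Wasserstein distance to the `q`-th power
(the infimum over couplings of the expected `q`-th power cost) equals it. -/
theorem wasserstein_eq_quantile_distance
    (q : ℝ) (hq : 1 ≤ q)
    (μ ν : Measure ℝ) [IsProbabilityMeasure μ] [IsProbabilityMeasure ν]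
    (hμ : ∫⁻ x, ENNReal.ofReal (|x| ^ q) ∂μ < ⊤)
    (hν : ∫⁻ x, ENNReal.ofReal (|x| ^ q) ∂ν < ⊤) :
    (∀ γ : Measure (ℝ × ℝ), IsProbabilityMeasure γ →
        γ.map Prod.fst = μ → γ.map Prod.snd = ν →
        (∫⁻ p in Set.Ioo (0 : ℝ) 1,
          ENNReal.ofReal (|quantileFn μ p - quantileFn ν p| ^ q)) ≤
          ∫⁻ z, ENNReal.ofReal (|z.1 - z.2| ^ q) ∂γ) ∧
    (⨅ γ : {γ : Measure (ℝ × ℝ) //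
        IsProbabilityMeasure γ ∧ γ.map Prod.fst = μ ∧ γ.map Prod.snd = ν},
        ∫⁻ z, ENNReal.ofReal (|z.1 - z.2| ^ q) ∂(γ : Measure (ℝ × ℝ))) =
      ∫⁻ p in Set.Ioo (0 : ℝ) 1,
        ENNReal.ofReal (|quantileFn μ p - quantileFn ν p| ^ q) :=
  wasserstein_eq_quantile_distance_general q hq μ ν
end

section
/- Let X be a real random variable and Z a random variable, and suppose for each value z, the conditional CDF F_{X|Z=z} is continuous and strictly increasing. Define X̃ = F̃⁻¹(F_{X|Z}(X, Z)) for a continuous strictly increasing CDF F̃. Then X̃ is independent of Z and X̃ has distribution F̃. -/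
open MeasureTheory ProbabilityTheory

/-- If for each value `z` of a finite-valued `Z` the conditional CDF `F_{X|Z=z}` is
continuous and strictly increasing, and `X̃ = F̃⁻¹(F_{X|Z}(X, Z))` for a continuous
strictly increasing CDF `F̃` (with inverse `G`), then `X̃` is independent of `Z` and `X̃`
has distribution `F̃`. -/
theorem conditional_quantile_transform_indep {Ω γ : Type*} [MeasurableSpace Ω]
    [MeasurableSpace γ] [MeasurableSingletonClass γ] [Finite γ]
    (P : Measure Ω) [IsProbabilityMeasure P]
    (X : Ω → ℝ) (Z : Ω → γ) (hX : Measurable X) (hZ : Measurable Z)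
    (hZpos : ∀ z : γ, 0 < P (Z ⁻¹' {z}))
    (F : γ → ℝ → ℝ)
    (hF : ∀ z : γ, ∀ t : ℝ, F z t = (P[|Z ⁻¹' {z}] {ω | X ω ≤ t}).toReal)
    (hFcont : ∀ z, Continuous (F z)) (hFmono : ∀ z, StrictMono (F z))
    (Ft : ℝ → ℝ) (hFtcont : Continuous Ft) (hFtmono : StrictMono Ft)
    (hFtrange : Set.range Ft = Set.Ioo (0 : ℝ) 1)
    (G : ℝ → ℝ) (hG : ∀ x, G (Ft x) = x) (hG' : ∀ p ∈ Set.Ioo (0 : ℝ) 1, Ft (G p) = p)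
    (Xt : Ω → ℝ) (hXt : Xt = fun ω => G (F (Z ω) (X ω))) (hmXt : Measurable Xt) :
    IndepFun Xt Z P ∧ ∀ t : ℝ, (P {ω | Xt ω ≤ t}).toReal = Ft t := by
  have hγc : Countable γ := Finite.to_countable
  have hZms : ∀ z : γ, MeasurableSet (Z ⁻¹' {z}) := fun z => hZ (measurableSet_singleton z)
  have hprob : ∀ z : γ, IsProbabilityMeasure (P[|Z ⁻¹' {z}]) := fun z =>
    cond_isProbabilityMeasure (hZpos z).ne'
  -- The conditional CDF takes values in (0, 1)
  have hle1 : ∀ z t, F z t ≤ 1 := by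
    intro z t
    rw [hF]
    have : (P[|Z ⁻¹' {z}] {ω | X ω ≤ t}) ≤ 1 := have := hprob z; prob_le_one
    calc (P[|Z ⁻¹' {z}] {ω | X ω ≤ t}).toReal ≤ (1 : ENNReal).toReal :=
          ENNReal.toReal_mono ENNReal.one_ne_top this
      _ = 1 := by simp
  have hge0 : ∀ z t, (0:ℝ) ≤ F z t := by
    intro z t; rw [hF]; exact ENNReal.toReal_nonneg
  have hF01 : ∀ z t, F z t ∈ Set.Ioo (0:ℝ) 1 :=
    fun z t => ⟨lt_of_le_of_lt (hge0 z (t - 1)) (hFmono z (by linarith)),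
      lt_of_lt_of_le (hFmono z (by linarith : t < t + 1)) (hle1 z (t + 1))⟩
  -- conditional probabilities are finite
  have hfin : ∀ z (A : Set Ω), P[|Z ⁻¹' {z}] A ≠ ⊤ := by
    intro z A
    have := hprob z
    exact measure_ne_top _ _
  -- Surjectivity of F z onto (0,1)
  have hsurj : ∀ z : γ, ∀ p ∈ Set.Ioo (0:ℝ) 1, ∃ s, F z s = p := by
    intro z p hp
    have hU : ∃ n : ℕ, p < F z n := by
      by_contra h
      push_neg at h
      have hmono : Monotone (fun n : ℕ => {ω | X ω ≤ (n:ℝ)}) := by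
        intro a b hab ω hω
        simp only [Set.mem_setOf_eq] at hω ⊢
        exact le_trans hω (by exact_mod_cast hab)
      have hun : (⋃ n : ℕ, {ω | X ω ≤ (n:ℝ)}) = Set.univ := by
        ext ω
        simp only [Set.mem_iUnion, Set.mem_setOf_eq, Set.mem_univ, iff_true]
        exact exists_nat_ge (X ω)
      have ht := tendsto_measure_iUnion_atTop (μ := P[|Z ⁻¹' {z}]) hmono
      rw [hun] at ht
      have hμuniv : P[|Z ⁻¹' {z}] Set.univ = 1 := (hprob z).measure_univ
      rw [hμuniv] at ht
      have hle : ∀ n : ℕ, (P[|Z ⁻¹' {z}] {ω | X ω ≤ (n:ℝ)}) ≤ ENNReal.ofReal p := by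
        intro n
        have h1 : (P[|Z ⁻¹' {z}] {ω | X ω ≤ (n:ℝ)}).toReal ≤ p := by
          rw [← hF]; exact h n
        calc P[|Z ⁻¹' {z}] {ω | X ω ≤ (n:ℝ)}
            = ENNReal.ofReal (P[|Z ⁻¹' {z}] {ω | X ω ≤ (n:ℝ)}).toReal :=
              (ENNReal.ofReal_toReal (hfin z _)).symm
          _ ≤ ENNReal.ofReal p := ENNReal.ofReal_le_ofReal h1
      have h1le : (1 : ENNReal) ≤ ENNReal.ofReal p :=
        le_of_tendsto ht (Filter.Eventually.of_forall hle)
      have : ENNReal.ofReal p < 1 := ENNReal.ofReal_lt_one.mpr hp.2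
      exact absurd h1le (not_le.mpr this)
    have hL : ∃ n : ℕ, F z (-(n:ℝ)) < p := by
      by_contra h
      push_neg at h
      have hanti : Antitone (fun n : ℕ => {ω | X ω ≤ -(n:ℝ)}) := by
        intro a b hab ω hω
        simp only [Set.mem_setOf_eq] at hω ⊢
        have : (a:ℝ) ≤ (b:ℝ) := by exact_mod_cast hab
        linarith
      have hin : (⋂ n : ℕ, {ω | X ω ≤ -(n:ℝ)}) = ∅ := by
        ext ω
        simp only [Set.mem_iInter, Set.mem_setOf_eq, Set.mem_empty_iff_false, iff_false,
          not_forall, not_le]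
        obtain ⟨n, hn⟩ := exists_nat_gt (-(X ω))
        exact ⟨n, by linarith⟩
      have ht := tendsto_measure_iInter_atTop (μ := P[|Z ⁻¹' {z}])
        (s := fun n : ℕ => {ω | X ω ≤ -(n:ℝ)})
        (fun n => (hX measurableSet_Iic).nullMeasurableSet) hanti ⟨0, hfin z _⟩
      rw [hin, measure_empty] at ht
      have hge : ∀ n : ℕ, ENNReal.ofReal p ≤ P[|Z ⁻¹' {z}] {ω | X ω ≤ -(n:ℝ)} := by
        intro n
        have h1 : p ≤ (P[|Z ⁻¹' {z}] {ω | X ω ≤ -(n:ℝ)}).toReal := by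
          rw [← hF]; exact h n
        calc ENNReal.ofReal p ≤ ENNReal.ofReal (P[|Z ⁻¹' {z}] {ω | X ω ≤ -(n:ℝ)}).toReal :=
              ENNReal.ofReal_le_ofReal h1
          _ = _ := ENNReal.ofReal_toReal (hfin z _)
      have h0 : ENNReal.ofReal p ≤ 0 := ge_of_tendsto ht (Filter.Eventually.of_forall hge)
      have : (0:ENNReal) < ENNReal.ofReal p := ENNReal.ofReal_pos.mpr hp.1
      exact absurd h0 (not_le.mpr this)
    obtain ⟨m, hm⟩ := hU
    obtain ⟨n, hn⟩ := hL
    have hab : -(n:ℝ) ≤ (m:ℝ) := le_of_lt ((hFmono z).lt_iff_lt.mp (lt_trans hn hm))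
    have := intermediate_value_Icc hab (hFcont z).continuousOn
    obtain ⟨s, _, hs⟩ := this ⟨hn.le, hm.le⟩
    exact ⟨s, hs⟩
  -- Ft takes values in (0,1)
  have hFt01 : ∀ t, Ft t ∈ Set.Ioo (0:ℝ) 1 := fun t => hFtrange ▸ Set.mem_range_self t
  -- key computation
  have key : ∀ (z : γ) (t : ℝ),
      P (Z ⁻¹' {z} ∩ {ω | Xt ω ≤ t}) = ENNReal.ofReal (Ft t) * P (Z ⁻¹' {z}) := by
    intro z t
    obtain ⟨s, hs⟩ := hsurj z (Ft t) (hFt01 t)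
    have hset : Z ⁻¹' {z} ∩ {ω | Xt ω ≤ t} = Z ⁻¹' {z} ∩ {ω | X ω ≤ s} := by
      ext ω
      simp only [Set.mem_inter_iff, Set.mem_preimage, Set.mem_singleton_iff, Set.mem_setOf_eq]
      constructor
      · rintro ⟨hz, hle⟩
        refine ⟨hz, ?_⟩
        rw [hXt] at hle
        simp only at hle
        rw [hz] at hle
        have hp := hF01 z (X ω)
        have h2 : Ft (G (F z (X ω))) ≤ Ft t := hFtmono.monotone hle
        rw [hG' _ hp] at h2
        rw [← hs] at h2
        exact (hFmono z).le_iff_le.mp h2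
      · rintro ⟨hz, hle⟩
        refine ⟨hz, ?_⟩
        rw [hXt]
        simp only
        rw [hz]
        have hp := hF01 z (X ω)
        have h1 : F z (X ω) ≤ Ft t := by
          rw [← hs]; exact (hFmono z).monotone hle
        have h2 : Ft (G (F z (X ω))) ≤ Ft t := by rw [hG' _ hp]; exact h1
        exact hFtmono.le_iff_le.mp h2
    rw [hset]
    have hc := cond_apply (hZms z) P {ω | X ω ≤ s}
    have hne0 : P (Z ⁻¹' {z}) ≠ 0 := (hZpos z).ne'
    have hnetop : P (Z ⁻¹' {z}) ≠ ⊤ := measure_ne_top P _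
    have : P (Z ⁻¹' {z} ∩ {ω | X ω ≤ s}) = P (Z ⁻¹' {z}) * P[|Z ⁻¹' {z}] {ω | X ω ≤ s} := by
      rw [hc, ← mul_assoc, ENNReal.mul_inv_cancel hne0 hnetop, one_mul]
    rw [this]
    have hμval : P[|Z ⁻¹' {z}] {ω | X ω ≤ s} = ENNReal.ofReal (Ft t) := by
      rw [← ENNReal.ofReal_toReal (hfin z {ω | X ω ≤ s}), ← hF, hs]
    rw [hμval, mul_comm]
  -- measurability of the slices
  have hmeas_slice : ∀ (t : ℝ) (z : γ), MeasurableSet (Z ⁻¹' {z} ∩ {ω | Xt ω ≤ t}) :=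
    fun t z => (hZms z).inter (hmXt measurableSet_Iic)
  have hdisj : ∀ t : ℝ, Pairwise (Function.onFun Disjoint
      fun z : γ => Z ⁻¹' {z} ∩ {ω | Xt ω ≤ t}) := by
    intro t i j hij
    apply Set.disjoint_left.mpr
    rintro ω ⟨hi, -⟩ ⟨hj, -⟩
    exact hij (hi.symm.trans hj)
  have hsumZ : ∑' z : γ, P (Z ⁻¹' {z}) = 1 := by
    have : (⋃ z : γ, Z ⁻¹' {z}) = Set.univ := by
      ext ω; simp
    rw [← measure_iUnion ?_ (fun z => hZms z), this, measure_univ]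
    intro i j hij
    apply Set.disjoint_left.mpr
    rintro ω hi hj
    exact hij ((Set.mem_singleton_iff.mp hi).symm.trans (Set.mem_singleton_iff.mp hj))
  have htot : ∀ t : ℝ, P {ω | Xt ω ≤ t} = ENNReal.ofReal (Ft t) := by
    intro t
    have hU : {ω | Xt ω ≤ t} = ⋃ z : γ, Z ⁻¹' {z} ∩ {ω | Xt ω ≤ t} := by
      ext ω; simp
    rw [hU, measure_iUnion (hdisj t) (hmeas_slice t)]
    simp_rw [key]
    rw [ENNReal.tsum_mul_left, hsumZ, mul_one]
  refine ⟨?_, fun t => by rw [htot t, ENNReal.toReal_ofReal (hFt01 t).1.le]⟩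
  -- Independence via π-systems
  have hindep : IndepSets {s | ∃ u ∈ Set.range Set.Iic, Xt ⁻¹' u = s}
      {s | ∃ u ∈ Set.range (fun z : γ => ({z} : Set γ)), Z ⁻¹' u = s} P := by
    rintro s1 s2 ⟨_, ⟨a, rfl⟩, rfl⟩ ⟨_, ⟨z, rfl⟩, rfl⟩
    refine Filter.Eventually.of_forall fun _ => ?_
    simp only [Kernel.const_apply]
    show P (Xt ⁻¹' Set.Iic a ∩ Z ⁻¹' {z}) = P (Xt ⁻¹' Set.Iic a) * P (Z ⁻¹' {z})
    have h1 : Xt ⁻¹' Set.Iic a = {ω | Xt ω ≤ a} := rfl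
    rw [h1, Set.inter_comm, key z a, htot a, mul_comm]
  have hpi1 : IsPiSystem {s | ∃ u ∈ Set.range Set.Iic, Xt ⁻¹' u = s} :=
    isPiSystem_Iic.comap Xt
  have hpi2 : IsPiSystem {s | ∃ u ∈ Set.range (fun z : γ => ({z} : Set γ)), Z ⁻¹' u = s} := by
    refine IsPiSystem.comap ?_ Z
    rintro _ ⟨i, rfl⟩ _ ⟨j, rfl⟩ hne
    obtain ⟨x, hxi, hxj⟩ := hne
    have hxi' : x = i := Set.mem_singleton_iff.mp hxi
    have hxj' : x = j := Set.mem_singleton_iff.mp hxj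
    have hij : i = j := hxi' ▸ hxj'
    subst hij
    exact ⟨i, by simp⟩
  have heq1 : MeasurableSpace.comap Xt (inferInstance : MeasurableSpace ℝ)
      = MeasurableSpace.generateFrom {s | ∃ u ∈ Set.range Set.Iic, Xt ⁻¹' u = s} := by
    conv_lhs => rw [BorelSpace.measurable_eq (α := ℝ), borel_eq_generateFrom_Iic ℝ]
    rw [MeasurableSpace.comap_generateFrom]
    rfl
  have hγeq : (inferInstance : MeasurableSpace γ)
      = MeasurableSpace.generateFrom (Set.range (fun z : γ => ({z} : Set γ))) := by
    refine le_antisymm ?_ ?_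
    · intro s _
      have hrw : s = ⋃ z ∈ s, {z} := (Set.biUnion_of_singleton s).symm
      rw [hrw]
      exact MeasurableSet.biUnion (Set.to_countable s)
        (fun z _ => MeasurableSpace.measurableSet_generateFrom ⟨z, rfl⟩)
    · refine MeasurableSpace.generateFrom_le ?_
      rintro _ ⟨z, rfl⟩
      exact measurableSet_singleton z
  have heq2 : MeasurableSpace.comap Z (inferInstance : MeasurableSpace γ)
      = MeasurableSpace.generateFrom
        {s | ∃ u ∈ Set.range (fun z : γ => ({z} : Set γ)), Z ⁻¹' u = s} := by
    conv_lhs => rw [hγeq]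
    rw [MeasurableSpace.comap_generateFrom]
    rfl
  exact IndepSets.indep hmXt.comap_le hZ.comap_le hpi1 hpi2 heq1 heq2 hindep
end
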